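/- Let (ρ, φ_ρ) be a right coaction of a quasi-Hopf algebra G on M with ρ(m) = m₍₀₎ ⊗ m₍₁₎, and define p_ρ := φ̄_ρ¹ ⊗ φ̄_ρ² β S(φ̄_ρ³) ∈ M ⊗ G and q_ρ := φ_ρ¹ ⊗ S⁻¹(α φ_ρ³)φ_ρ² ∈ M ⊗ G. Then for all m ∈ M: ρ(m₍₀₎)·p_ρ·(1_M ⊗ S(m₍₁₎)) = p_ρ·(m ⊗ 1_G), (1_M ⊗ S⁻¹(m₍₁₎))·q_ρ·ρ(m₍₀₎) = (m ⊗ 1_G)·q_ρ, ρ(q_ρ¹)·p_ρ·(1_M ⊗ S(q_ρ²)) = 1_M ⊗ 1_G, and (1_M ⊗ S⁻¹(p_ρ²))·q_ρ·ρ(p_ρ¹) = 1_M ⊗ 1_G. -/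

import Mathlib

open TensorProduct

set_option maxHeartbeats 1000000
set_option synthInstance.maxHeartbeats 1000000

noncomputable section

/-- A quasi-bialgebra structure (Drinfeld) on an algebra `G` over `ℂ`: algebra maps
`Δ : G → G ⊗ G` and `ε : G → ℂ`, together with an invertible reassociator
`φ ∈ G ⊗ G ⊗ G` satisfying quasi-coassociativity, the pentagon identity and the counit
axioms. -/
structure QuasiBialg (G : Type*) [Ring G] [Algebra ℂ G] where
  comul : G →ₐ[ℂ] G ⊗[ℂ] G
  counit : G →ₐ[ℂ] ℂ
  assocEl : G ⊗[ℂ] (G ⊗[ℂ] G)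
  assocElInv : G ⊗[ℂ] (G ⊗[ℂ] G)
  assocEl_mul_inv : assocEl * assocElInv = 1
  assocEl_inv_mul : assocElInv * assocEl = 1
  quasiCoassoc : ∀ a : G,
    TensorProduct.map LinearMap.id comul.toLinearMap (comul a) * assocEl =
      assocEl *
        (TensorProduct.assoc ℂ G G G)
          (TensorProduct.map comul.toLinearMap LinearMap.id (comul a))
  counit_comul_left : ∀ a : G,
    (TensorProduct.lid ℂ G)
      (TensorProduct.map counit.toLinearMap LinearMap.id (comul a)) = a
  counit_comul_right : ∀ a : G,
    (TensorProduct.rid ℂ G)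
      (TensorProduct.map LinearMap.id counit.toLinearMap (comul a)) = a
  counit_assocEl :
    TensorProduct.map LinearMap.id
        ((TensorProduct.lid ℂ G).toLinearMap ∘ₗ
          TensorProduct.map counit.toLinearMap LinearMap.id) assocEl =
      (1 : G ⊗[ℂ] G)
  pentagon :
    TensorProduct.map LinearMap.id
          (TensorProduct.map LinearMap.id comul.toLinearMap) assocEl *
        (TensorProduct.assoc ℂ G G (G ⊗[ℂ] G))
          (TensorProduct.map comul.toLinearMap LinearMap.id assocEl) =
      ((1 : G) ⊗ₜ[ℂ] assocEl) *
        TensorProduct.map LinearMap.id (TensorProduct.assoc ℂ G G G).toLinearMap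
          (TensorProduct.map LinearMap.id
            (TensorProduct.map comul.toLinearMap LinearMap.id) assocEl) *
        TensorProduct.map LinearMap.id (TensorProduct.assoc ℂ G G G).toLinearMap
          ((TensorProduct.assoc ℂ G (G ⊗[ℂ] G) G) (assocEl ⊗ₜ[ℂ] (1 : G)))

/-- A quasi-Hopf algebra structure (Drinfeld) on an algebra `G` over `ℂ`: a quasi-bialgebra
together with an invertible algebra antimorphism `S` and elements `α, β ∈ G` satisfying the
antipode axioms. -/
structure QuasiHopf (G : Type*) [Ring G] [Algebra ℂ G] extends QuasiBialg G where
  S : G →ₗ[ℂ] G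
  S_one : S 1 = 1
  S_mul : ∀ a b : G, S (a * b) = S b * S a
  Sinv : G →ₗ[ℂ] G
  Sinv_S : ∀ a : G, Sinv (S a) = a
  S_Sinv : ∀ a : G, S (Sinv a) = a
  alphaEl : G
  betaEl : G
  antipode_left : ∀ a : G,
    LinearMap.mul' ℂ G
        (TensorProduct.map (LinearMap.mulRight ℂ alphaEl ∘ₗ S) LinearMap.id (comul a)) =
      counit a • alphaEl
  antipode_right : ∀ a : G,
    LinearMap.mul' ℂ G
        (TensorProduct.map (LinearMap.mulRight ℂ betaEl) S (comul a)) =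
      counit a • betaEl
  antipode_assocEl :
    (LinearMap.mul' ℂ G ∘ₗ
        TensorProduct.map (LinearMap.mulRight ℂ betaEl)
          (LinearMap.mul' ℂ G ∘ₗ
            TensorProduct.map (LinearMap.mulRight ℂ alphaEl ∘ₗ S) LinearMap.id))
      assocEl = 1
  antipode_assocElInv :
    (LinearMap.mul' ℂ G ∘ₗ
        TensorProduct.map (LinearMap.mulRight ℂ alphaEl ∘ₗ S)
          (LinearMap.mul' ℂ G ∘ₗ
            TensorProduct.map (LinearMap.mulRight ℂ betaEl) S))
      assocElInv = 1

/-- A right coaction `(ρ, φ_ρ)` of a quasi-bialgebra `Q` on an algebra `M`: an algebra map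
`ρ : M → M ⊗ G` with invertible reassociator `φ_ρ ∈ M ⊗ G ⊗ G` satisfying the intertwining
relation, the mixed pentagon identity and the counit axioms. -/
structure RightQCoaction (G M : Type*) [Ring G] [Algebra ℂ G] [Ring M] [Algebra ℂ M]
    (Q : QuasiBialg G) where
  rho : M →ₐ[ℂ] M ⊗[ℂ] G
  phiR : M ⊗[ℂ] (G ⊗[ℂ] G)
  phiRInv : M ⊗[ℂ] (G ⊗[ℂ] G)
  phiR_mul_inv : phiR * phiRInv = 1
  phiR_inv_mul : phiRInv * phiR = 1
  intertwine : ∀ m : M,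
    phiR *
        (TensorProduct.assoc ℂ M G G)
          (TensorProduct.map rho.toLinearMap LinearMap.id (rho m)) =
      TensorProduct.map LinearMap.id Q.comul.toLinearMap (rho m) * phiR
  pentagon :
    ((1 : M) ⊗ₜ[ℂ] Q.assocEl) *
        TensorProduct.map LinearMap.id (TensorProduct.assoc ℂ G G G).toLinearMap
          (TensorProduct.map LinearMap.id
            (TensorProduct.map Q.comul.toLinearMap LinearMap.id) phiR) *
        TensorProduct.map LinearMap.id (TensorProduct.assoc ℂ G G G).toLinearMap
          ((TensorProduct.assoc ℂ M (G ⊗[ℂ] G) G) (phiR ⊗ₜ[ℂ] (1 : G))) =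
      TensorProduct.map LinearMap.id
          (TensorProduct.map LinearMap.id Q.comul.toLinearMap) phiR *
        (TensorProduct.assoc ℂ M G (G ⊗[ℂ] G))
          (TensorProduct.map rho.toLinearMap LinearMap.id phiR)
  counit_rho : ∀ m : M,
    (TensorProduct.rid ℂ M)
      (TensorProduct.map LinearMap.id Q.counit.toLinearMap (rho m)) = m
  counit_phiR_mid :
    TensorProduct.map LinearMap.id
        ((TensorProduct.lid ℂ G).toLinearMap ∘ₗ
          TensorProduct.map Q.counit.toLinearMap LinearMap.id) phiR =
      (1 : M ⊗[ℂ] G)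
  counit_phiR_right :
    TensorProduct.map LinearMap.id
        ((TensorProduct.rid ℂ G).toLinearMap ∘ₗ
          TensorProduct.map LinearMap.id Q.counit.toLinearMap) phiR =
      (1 : M ⊗[ℂ] G)

variable {G M : Type*} [Ring G] [Algebra ℂ G] [Ring M] [Algebra ℂ M]

/-- The element `p_ρ = φ̄_ρ¹ ⊗ φ̄_ρ² β S(φ̄_ρ³) ∈ M ⊗ G`. -/
def pRho (Q : QuasiHopf G) (R : RightQCoaction G M Q.toQuasiBialg) : M ⊗[ℂ] G :=
  TensorProduct.map LinearMap.id
    (LinearMap.mul' ℂ G ∘ₗ TensorProduct.map (LinearMap.mulRight ℂ Q.betaEl) Q.S)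
    R.phiRInv

/-- The element `q_ρ = φ_ρ¹ ⊗ S⁻¹(α φ_ρ³) φ_ρ² ∈ M ⊗ G`. -/
def qRho (Q : QuasiHopf G) (R : RightQCoaction G M Q.toQuasiBialg) : M ⊗[ℂ] G :=
  TensorProduct.map LinearMap.id
    (LinearMap.mul' ℂ G ∘ₗ
      TensorProduct.map (Q.Sinv ∘ₗ LinearMap.mulLeft ℂ Q.alphaEl) LinearMap.id ∘ₗ
      (TensorProduct.comm ℂ G G).toLinearMap)
    R.phiR

/-- For `n ⊗ y ∈ M ⊗ G`, the element `ρ(n)·t·(1_M ⊗ S(y)) ∈ M ⊗ G` (extended bilinearly);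
used to express `ρ(m₍₀₎)·p_ρ·(1_M ⊗ S(m₍₁₎))`. -/
def thetaRP (Q : QuasiHopf G) (R : RightQCoaction G M Q.toQuasiBialg) (t : M ⊗[ℂ] G) :
    M ⊗[ℂ] G →ₗ[ℂ] M ⊗[ℂ] G :=
  TensorProduct.lift (LinearMap.mul ℂ (M ⊗[ℂ] G) ∘ₗ LinearMap.mulRight ℂ t) ∘ₗ
    TensorProduct.map R.rho.toLinearMap (TensorProduct.mk ℂ M G (1 : M) ∘ₗ Q.S)

/-- For `n ⊗ y ∈ M ⊗ G`, the element `(1_M ⊗ S⁻¹(y))·t·ρ(n) ∈ M ⊗ G` (extended bilinearly);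
used to express `(1_M ⊗ S⁻¹(m₍₁₎))·q_ρ·ρ(m₍₀₎)`. -/
def thetaRQ (Q : QuasiHopf G) (R : RightQCoaction G M Q.toQuasiBialg) (t : M ⊗[ℂ] G) :
    M ⊗[ℂ] G →ₗ[ℂ] M ⊗[ℂ] G :=
  TensorProduct.lift (LinearMap.mul ℂ (M ⊗[ℂ] G) ∘ₗ LinearMap.mulRight ℂ t) ∘ₗ
    TensorProduct.map (TensorProduct.mk ℂ M G (1 : M) ∘ₗ Q.Sinv) R.rho.toLinearMap ∘ₗ
    (TensorProduct.comm ℂ M G).toLinearMap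


namespace QH17

variable {G M : Type*} [Ring G] [Algebra ℂ G] [Ring M] [Algebra ℂ M]

section Glevel
variable (Q : QuasiHopf G)

lemma sinv_one : Q.Sinv 1 = 1 := by
  conv_lhs => rw [← Q.S_one]
  rw [Q.Sinv_S]

lemma sinv_mul (a b : G) : Q.Sinv (a * b) = Q.Sinv b * Q.Sinv a := by
  have h : a * b = Q.S (Q.Sinv b * Q.Sinv a) := by rw [Q.S_mul, Q.S_Sinv, Q.S_Sinv]
  rw [h, Q.Sinv_S]

/-- `Fb (x ⊗ y) = x β S y` -/
def Fb : G ⊗[ℂ] G →ₗ[ℂ] G :=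
  LinearMap.mul' ℂ G ∘ₗ TensorProduct.map (LinearMap.mulRight ℂ Q.betaEl) Q.S

@[simp] lemma Fb_tmul (x y : G) : Fb Q (x ⊗ₜ y) = x * Q.betaEl * Q.S y := rfl

/-- `Fa (x ⊗ y) = S x α y` -/
def Fa : G ⊗[ℂ] G →ₗ[ℂ] G :=
  LinearMap.mul' ℂ G ∘ₗ
    TensorProduct.map (LinearMap.mulRight ℂ Q.alphaEl ∘ₗ Q.S) LinearMap.id

@[simp] lemma Fa_tmul (x y : G) : Fa Q (x ⊗ₜ y) = Q.S x * Q.alphaEl * y := rfl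

lemma Fb_comul (a : G) : Fb Q (Q.comul a) = Q.counit a • Q.betaEl := Q.antipode_right a

lemma Fa_comul (a : G) : Fa Q (Q.comul a) = Q.counit a • Q.alphaEl := Q.antipode_left a

/-- `Ga (x ⊗ y) = S⁻¹(α y) x` -/
def Ga : G ⊗[ℂ] G →ₗ[ℂ] G :=
  LinearMap.mul' ℂ G ∘ₗ
    TensorProduct.map (Q.Sinv ∘ₗ LinearMap.mulLeft ℂ Q.alphaEl) LinearMap.id ∘ₗ
    (TensorProduct.comm ℂ G G).toLinearMap

@[simp] lemma Ga_tmul (x y : G) : Ga Q (x ⊗ₜ y) = Q.Sinv (Q.alphaEl * y) * x := rfl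

lemma Ga_eq : Ga Q = Q.Sinv ∘ₗ Fa Q := by
  apply TensorProduct.ext'
  intro x y
  simp [sinv_mul, Q.Sinv_S, mul_assoc]

lemma Ga_comul (a : G) : Ga Q (Q.comul a) = Q.counit a • Q.Sinv Q.alphaEl := by
  rw [Ga_eq]
  simp [Fa_comul]

lemma S_Ga (w : G ⊗[ℂ] G) : Q.S (Ga Q w) = Fa Q w := by
  rw [Ga_eq]; simp [Q.S_Sinv]

/-- `Gb = S⁻¹ ∘ Fb`, so `Gb (x ⊗ y) = y S⁻¹(β) S⁻¹(x)` -/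
def Gb : G ⊗[ℂ] G →ₗ[ℂ] G := Q.Sinv ∘ₗ Fb Q

@[simp] lemma Gb_tmul (x y : G) :
    Gb Q (x ⊗ₜ y) = y * Q.Sinv Q.betaEl * Q.Sinv x := by
  simp [Gb, sinv_mul, Q.Sinv_S, mul_assoc]

lemma Gb_comul (a : G) : Gb Q (Q.comul a) = Q.counit a • Q.Sinv Q.betaEl := by
  simp [Gb, Fb_comul]

lemma Sinv_Fb (w : G ⊗[ℂ] G) : Q.Sinv (Fb Q w) = Gb Q w := rfl

/-- `w0 (a ⊗ b ⊗ c) = a β S(b) α c`; this is the map appearing in `antipode_assocEl`. -/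
def w0 : G ⊗[ℂ] (G ⊗[ℂ] G) →ₗ[ℂ] G :=
  LinearMap.mul' ℂ G ∘ₗ TensorProduct.map (LinearMap.mulRight ℂ Q.betaEl) (Fa Q)

@[simp] lemma w0_tmul (a : G) (z : G ⊗[ℂ] G) :
    w0 Q (a ⊗ₜ z) = a * Q.betaEl * Fa Q z := rfl

lemma w0_assocEl : w0 Q Q.assocEl = 1 := Q.antipode_assocEl

/-- `u0` is the map appearing in `antipode_assocElInv`: `u0 (a ⊗ b ⊗ c) = S(a) α b β S(c)`. -/
def u0 : G ⊗[ℂ] (G ⊗[ℂ] G) →ₗ[ℂ] G :=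
  LinearMap.mul' ℂ G ∘ₗ
    TensorProduct.map (LinearMap.mulRight ℂ Q.alphaEl ∘ₗ Q.S) (Fb Q)

/-- `v0 (a ⊗ b ⊗ c) = c S⁻¹(β) S⁻¹(b) S⁻¹(α) a`. -/
def v0 : G ⊗[ℂ] (G ⊗[ℂ] G) →ₗ[ℂ] G := Q.Sinv ∘ₗ u0 Q

lemma v0_tmul (a : G) (z : G ⊗[ℂ] G) :
    v0 Q (a ⊗ₜ z) = Gb Q z * (Q.Sinv Q.alphaEl * a) := by
  simp [v0, u0, Gb, sinv_mul, Q.Sinv_S]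

lemma v0_assocElInv : v0 Q Q.assocElInv = 1 := by
  have h : u0 Q Q.assocElInv = 1 := Q.antipode_assocElInv
  simp [v0, h, sinv_one]

/- multiplication lemmas -/

lemma Fb_tmul_mul (a b : G) (w : G ⊗[ℂ] G) :
    Fb Q ((a ⊗ₜ b) * w) = a * Fb Q w * Q.S b := by
  induction w using TensorProduct.induction_on with
  | zero => simp
  | tmul c d => simp [Algebra.TensorProduct.tmul_mul_tmul, Q.S_mul, mul_assoc]
  | add x y hx hy => simp [mul_add, hx, hy, add_mul]

lemma Fb_mul_comul (w : G ⊗[ℂ] G) (y : G) :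
    Fb Q (w * Q.comul y) = Q.counit y • Fb Q w := by
  induction w using TensorProduct.induction_on with
  | zero => simp
  | tmul a b => rw [Fb_tmul_mul, Fb_comul]; simp [smul_mul_assoc, mul_smul_comm]
  | add x y hx hy => simp [add_mul, hx, hy]

lemma Fa_mul_tmul (w : G ⊗[ℂ] G) (x y : G) :
    Fa Q (w * (x ⊗ₜ y)) = Q.S x * Fa Q w * y := by
  induction w using TensorProduct.induction_on with
  | zero => simp
  | tmul a b => simp [Algebra.TensorProduct.tmul_mul_tmul, Q.S_mul, mul_assoc]
  | add u v hu hv => simp [add_mul, hu, hv, mul_add]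

lemma Fa_comul_mul (y : G) (w : G ⊗[ℂ] G) :
    Fa Q (Q.comul y * w) = Q.counit y • Fa Q w := by
  induction w using TensorProduct.induction_on with
  | zero => simp
  | tmul x z => rw [Fa_mul_tmul, Fa_comul]; simp [smul_mul_assoc, mul_smul_comm]
  | add u v hu hv => simp [mul_add, hu, hv]

lemma Ga_mul_tmul (w : G ⊗[ℂ] G) (c d : G) :
    Ga Q (w * (c ⊗ₜ d)) = Q.Sinv d * Ga Q w * c := by
  induction w using TensorProduct.induction_on with
  | zero => simp
  | tmul x y =>
      simp [Algebra.TensorProduct.tmul_mul_tmul, sinv_mul, mul_assoc]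
  | add u v hu hv => simp [add_mul, hu, hv, mul_add]

lemma Ga_comul_mul (y : G) (w : G ⊗[ℂ] G) :
    Ga Q (Q.comul y * w) = Q.counit y • Ga Q w := by
  induction w using TensorProduct.induction_on with
  | zero => simp
  | tmul c d =>
      rw [Ga_mul_tmul, Ga_comul]
      simp [smul_mul_assoc, mul_smul_comm, sinv_mul, mul_assoc]
  | add u v hu hv => simp [mul_add, hu, hv]

lemma Gb_tmul_mul (x y : G) (w : G ⊗[ℂ] G) :
    Gb Q ((x ⊗ₜ y) * w) = y * Gb Q w * Q.Sinv x := by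
  induction w using TensorProduct.induction_on with
  | zero => simp
  | tmul c d =>
      simp [Algebra.TensorProduct.tmul_mul_tmul, sinv_mul, mul_assoc]
  | add u v hu hv => simp [mul_add, hu, hv, add_mul]

lemma Gb_mul_comul (w : G ⊗[ℂ] G) (d : G) :
    Gb Q (w * Q.comul d) = Q.counit d • Gb Q w := by
  induction w using TensorProduct.induction_on with
  | zero => simp
  | tmul x y => rw [Gb_tmul_mul, Gb_comul]; simp [smul_mul_assoc, mul_smul_comm]
  | add u v hu hv => simp [add_mul, hu, hv]

end Glevel

section Tlevel
variable (Q : QuasiHopf G) (R : RightQCoaction G M Q.toQuasiBialg)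

@[local instance 2000] noncomputable abbrev instRingT4 :
    Ring (M ⊗[ℂ] (G ⊗[ℂ] (G ⊗[ℂ] G))) := inferInstance

/-! ### The main linear maps -/

def Pmap : M ⊗[ℂ] (G ⊗[ℂ] G) →ₗ[ℂ] M ⊗[ℂ] G :=
  TensorProduct.map LinearMap.id (Fb Q)

def Kmap : M ⊗[ℂ] (G ⊗[ℂ] G) →ₗ[ℂ] M ⊗[ℂ] G :=
  TensorProduct.map LinearMap.id (Ga Q)

def W0 : M ⊗[ℂ] (G ⊗[ℂ] (G ⊗[ℂ] G)) →ₗ[ℂ] M ⊗[ℂ] G :=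
  TensorProduct.map LinearMap.id (w0 Q)

def V0 : M ⊗[ℂ] (G ⊗[ℂ] (G ⊗[ℂ] G)) →ₗ[ℂ] M ⊗[ℂ] G :=
  TensorProduct.map LinearMap.id (v0 Q)

def D3 : M ⊗[ℂ] (G ⊗[ℂ] G) →ₗ[ℂ] M ⊗[ℂ] (G ⊗[ℂ] (G ⊗[ℂ] G)) :=
  TensorProduct.map LinearMap.id (TensorProduct.map LinearMap.id Q.comul.toLinearMap)

def R4 : M ⊗[ℂ] (G ⊗[ℂ] G) →ₗ[ℂ] M ⊗[ℂ] (G ⊗[ℂ] (G ⊗[ℂ] G)) :=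
  (TensorProduct.assoc ℂ M G (G ⊗[ℂ] G)).toLinearMap ∘ₗ
    TensorProduct.map R.rho.toLinearMap LinearMap.id

def e2M : M ⊗[ℂ] (G ⊗[ℂ] G) →ₗ[ℂ] M ⊗[ℂ] (G ⊗[ℂ] (G ⊗[ℂ] G)) :=
  TensorProduct.map LinearMap.id (TensorProduct.assoc ℂ G G G).toLinearMap ∘ₗ
    TensorProduct.map LinearMap.id (TensorProduct.map Q.comul.toLinearMap LinearMap.id)

def e3M : M ⊗[ℂ] (G ⊗[ℂ] G) →ₗ[ℂ] M ⊗[ℂ] (G ⊗[ℂ] (G ⊗[ℂ] G)) :=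
  have _ := Q
  TensorProduct.map LinearMap.id (TensorProduct.assoc ℂ G G G).toLinearMap ∘ₗ
    (TensorProduct.assoc ℂ M (G ⊗[ℂ] G) G).toLinearMap ∘ₗ
    (TensorProduct.mk ℂ (M ⊗[ℂ] (G ⊗[ℂ] G)) G).flip (1 : G)

def e12 : G ⊗[ℂ] G →ₗ[ℂ] G ⊗[ℂ] (G ⊗[ℂ] G) :=
  TensorProduct.map LinearMap.id
    (LinearMap.toSpanSingleton ℂ (G ⊗[ℂ] G) ((1 : G) ⊗ₜ (1 : G)) ∘ₗ Q.counit.toLinearMap)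

@[simp] lemma e12_tmul (c d : G) :
    e12 Q (c ⊗ₜ d) = Q.counit d • (c ⊗ₜ ((1 : G) ⊗ₜ (1 : G))) := by
  simp [e12]

def e34' : G ⊗[ℂ] G →ₗ[ℂ] G ⊗[ℂ] (G ⊗[ℂ] G) :=
  TensorProduct.map (LinearMap.toSpanSingleton ℂ G 1 ∘ₗ Q.counit.toLinearMap)
    (TensorProduct.mk ℂ G G 1)

@[simp] lemma e34'_tmul (c d : G) :
    e34' Q (c ⊗ₜ d) = Q.counit c • ((1 : G) ⊗ₜ ((1 : G) ⊗ₜ d)) := by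
  simp [e34', smul_tmul']

def EM12 : M ⊗[ℂ] (G ⊗[ℂ] G) →ₗ[ℂ] M ⊗[ℂ] (G ⊗[ℂ] (G ⊗[ℂ] G)) :=
  TensorProduct.map LinearMap.id (e12 Q)

def EM34 : M ⊗[ℂ] (G ⊗[ℂ] G) →ₗ[ℂ] M ⊗[ℂ] (G ⊗[ℂ] (G ⊗[ℂ] G)) :=
  TensorProduct.map LinearMap.id (e34' Q)

def eps3lin : M ⊗[ℂ] (G ⊗[ℂ] G) →ₗ[ℂ] M ⊗[ℂ] G :=
  TensorProduct.map LinearMap.id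
    ((TensorProduct.rid ℂ G).toLinearMap ∘ₗ
      TensorProduct.map LinearMap.id Q.counit.toLinearMap)

def eps2lin : M ⊗[ℂ] (G ⊗[ℂ] G) →ₗ[ℂ] M ⊗[ℂ] G :=
  TensorProduct.map LinearMap.id
    ((TensorProduct.lid ℂ G).toLinearMap ∘ₗ
      TensorProduct.map Q.counit.toLinearMap LinearMap.id)

/-! ### G-level product lemmas for `w0` and `v0` -/

lemma w0_mul_assoc_tmul (a : G) (z₂ : G ⊗[ℂ] G) (v : G ⊗[ℂ] G) (d : G) :
    w0 Q ((a ⊗ₜ z₂) * (TensorProduct.assoc ℂ G G G) (v ⊗ₜ d)) =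
      a * Fb Q v * Fa Q z₂ * d := by
  induction v using TensorProduct.induction_on with
  | zero => simp
  | tmul v1 v2 =>
      simp [Algebra.TensorProduct.tmul_mul_tmul, Fa_mul_tmul, mul_assoc]
  | add x y hx hy => simp [add_tmul, mul_add, add_mul, hx, hy]

lemma w0_d3_mul (w : G ⊗[ℂ] G) (z : G ⊗[ℂ] (G ⊗[ℂ] G)) :
    w0 Q (TensorProduct.map LinearMap.id Q.comul.toLinearMap w * z) =
      w0 Q (e12 Q w * z) := by
  induction w using TensorProduct.induction_on with
  | zero => simp
  | tmul c d =>
      simp only [TensorProduct.map_tmul, LinearMap.id_coe, id_eq,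
        AlgHom.toLinearMap_apply, e12_tmul]
      induction z using TensorProduct.induction_on with
      | zero => simp
      | tmul a z2 =>
          simp [Algebra.TensorProduct.tmul_mul_tmul, smul_mul_assoc,
            Fa_comul_mul, mul_smul_comm, ← Algebra.TensorProduct.one_def]
      | add x y hx hy => simp only [mul_add, map_add, hx, hy]
  | add x y hx hy => simp only [map_add, add_mul, map_add, hx, hy]

lemma w0_mul_e2g (z : G ⊗[ℂ] (G ⊗[ℂ] G)) (w : G ⊗[ℂ] G) :
    w0 Q (z * (TensorProduct.assoc ℂ G G G)
        (TensorProduct.map Q.comul.toLinearMap LinearMap.id w)) =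
      w0 Q (z * e34' Q w) := by
  induction w using TensorProduct.induction_on with
  | zero => simp
  | tmul c d =>
      simp only [TensorProduct.map_tmul, LinearMap.id_coe, id_eq,
        AlgHom.toLinearMap_apply, e34'_tmul]
      induction z using TensorProduct.induction_on with
      | zero => simp
      | tmul a z2 =>
          rw [w0_mul_assoc_tmul, Fb_comul]
          simp [Algebra.TensorProduct.tmul_mul_tmul, mul_smul_comm,
            smul_mul_assoc, Fa_mul_tmul, Q.S_one, mul_assoc]
      | add x y hx hy => simp only [add_mul, map_add, hx, hy]
  | add x y hx hy => simp only [map_add, LinearEquiv.map_add, mul_add, hx, hy]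

lemma v0_assoc_tmul_mul (v : G ⊗[ℂ] G) (d a : G) (z₂ : G ⊗[ℂ] G) :
    v0 Q ((TensorProduct.assoc ℂ G G G) (v ⊗ₜ d) * (a ⊗ₜ z₂)) =
      d * Gb Q z₂ * Ga Q v * a := by
  induction v using TensorProduct.induction_on with
  | zero => simp
  | tmul v1 v2 =>
      simp [Algebra.TensorProduct.tmul_mul_tmul, v0_tmul, Gb_tmul_mul,
        sinv_mul, mul_assoc]
  | add x y hx hy => simp [add_tmul, add_mul, mul_add, hx, hy]

lemma v0_e2g_mul (w : G ⊗[ℂ] G) (z : G ⊗[ℂ] (G ⊗[ℂ] G)) :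
    v0 Q ((TensorProduct.assoc ℂ G G G)
        (TensorProduct.map Q.comul.toLinearMap LinearMap.id w) * z) =
      v0 Q (e34' Q w * z) := by
  induction w using TensorProduct.induction_on with
  | zero => simp
  | tmul c d =>
      simp only [TensorProduct.map_tmul, LinearMap.id_coe, id_eq,
        AlgHom.toLinearMap_apply, e34'_tmul]
      induction z using TensorProduct.induction_on with
      | zero => simp
      | tmul a z2 =>
          rw [v0_assoc_tmul_mul, Ga_comul]
          simp [Algebra.TensorProduct.tmul_mul_tmul, v0_tmul, Gb_tmul_mul,
            sinv_one, smul_mul_assoc, mul_smul_comm, mul_assoc]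
      | add x y hx hy => simp only [mul_add, map_add, hx, hy]
  | add x y hx hy => simp only [map_add, LinearEquiv.map_add, add_mul, hx, hy]

lemma v0_mul_d3 (z : G ⊗[ℂ] (G ⊗[ℂ] G)) (w : G ⊗[ℂ] G) :
    v0 Q (z * TensorProduct.map LinearMap.id Q.comul.toLinearMap w) =
      v0 Q (z * e12 Q w) := by
  induction w using TensorProduct.induction_on with
  | zero => simp
  | tmul c d =>
      simp only [TensorProduct.map_tmul, LinearMap.id_coe, id_eq,
        AlgHom.toLinearMap_apply, e12_tmul]
      induction z using TensorProduct.induction_on with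
      | zero => simp
      | tmul a z2 =>
          simp [Algebra.TensorProduct.tmul_mul_tmul, v0_tmul, Gb_mul_comul,
            smul_mul_assoc, mul_smul_comm, ← Algebra.TensorProduct.one_def,
            mul_assoc]
      | add x y hx hy => simp only [add_mul, map_add, hx, hy]
  | add x y hx hy => simp only [map_add, mul_add, hx, hy]


/-! ### theta applications and the easy statements -/

lemma thetaRP_apply (t : M ⊗[ℂ] G) (n : M) (y : G) :
    thetaRP Q R t (n ⊗ₜ y) = R.rho n * t * ((1 : M) ⊗ₜ Q.S y) := rfl

lemma thetaRQ_apply (t : M ⊗[ℂ] G) (n : M) (y : G) :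
    thetaRQ Q R t (n ⊗ₜ y) = ((1 : M) ⊗ₜ Q.Sinv y) * t * R.rho n := rfl

lemma pRho_eq : pRho Q R = Pmap Q R.phiRInv := rfl

lemma qRho_eq : qRho Q R = Kmap Q R.phiR := rfl

lemma conj_swap {A : Type*} [Ring A] {p pi x y : A}
    (hip : pi * p = 1) (hpi : p * pi = 1) (h : p * x = y * p) : x * pi = pi * y := by
  calc x * pi = pi * p * x * pi := by rw [hip, one_mul]
    _ = pi * (p * x) * pi := by rw [mul_assoc pi p x]
    _ = pi * (y * p) * pi := by rw [h]
    _ = pi * y * (p * pi) := by rw [← mul_assoc pi y p, mul_assoc (pi * y) p pi]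
    _ = pi * y := by rw [hpi, mul_one]

lemma intw_inv (m : M) :
    (TensorProduct.assoc ℂ M G G)
        (TensorProduct.map R.rho.toLinearMap LinearMap.id (R.rho m)) * R.phiRInv =
      R.phiRInv * TensorProduct.map LinearMap.id Q.comul.toLinearMap (R.rho m) :=
  conj_swap R.phiR_inv_mul R.phiR_mul_inv (R.intertwine m)

lemma lemA (t : M ⊗[ℂ] G) (U : M ⊗[ℂ] (G ⊗[ℂ] G)) :
    thetaRP Q R (Pmap Q U) t =
      Pmap Q ((TensorProduct.assoc ℂ M G G)
        (TensorProduct.map R.rho.toLinearMap LinearMap.id t) * U) := by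
  induction t using TensorProduct.induction_on with
  | zero => simp
  | add x y hx hy => simp only [map_add, LinearEquiv.map_add, add_mul, hx, hy]
  | tmul n y =>
      rw [thetaRP_apply]
      simp only [TensorProduct.map_tmul, LinearMap.id_coe, id_eq,
        AlgHom.toLinearMap_apply]
      generalize R.rho n = r
      induction r using TensorProduct.induction_on with
      | zero => simp
      | add x y hx hy =>
          simp only [add_mul, add_tmul, LinearEquiv.map_add, map_add, hx, hy]
      | tmul r1 r2 =>
          induction U using TensorProduct.induction_on with
          | zero => simp
          | add x y hx hy => simp only [map_add, mul_add, add_mul, hx, hy]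
          | tmul u z =>
              simp only [Pmap, TensorProduct.map_tmul, LinearMap.id_coe, id_eq,
                TensorProduct.assoc_tmul, Algebra.TensorProduct.tmul_mul_tmul,
                Fb_tmul_mul, mul_one, one_mul]

lemma lemB (V : M ⊗[ℂ] (G ⊗[ℂ] G)) (t : M ⊗[ℂ] G) :
    Pmap Q (V * TensorProduct.map LinearMap.id Q.comul.toLinearMap t) =
      Pmap Q V *
        ((TensorProduct.rid ℂ M)
          (TensorProduct.map LinearMap.id Q.counit.toLinearMap t) ⊗ₜ (1 : G)) := by
  induction t using TensorProduct.induction_on with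
  | zero => simp
  | add x y hx hy =>
      simp only [map_add, LinearEquiv.map_add, mul_add, add_tmul, hx, hy]
  | tmul n y =>
      simp only [TensorProduct.map_tmul, LinearMap.id_coe, id_eq,
        AlgHom.toLinearMap_apply, TensorProduct.rid_tmul]
      induction V using TensorProduct.induction_on with
      | zero => simp
      | add x y hx hy => simp only [add_mul, map_add, hx, hy]
      | tmul v w =>
          simp [Pmap, Algebra.TensorProduct.tmul_mul_tmul, Fb_mul_comul,
            smul_tmul', tmul_smul, smul_mul_assoc, mul_smul_comm]

lemma lemA' (t : M ⊗[ℂ] G) (U : M ⊗[ℂ] (G ⊗[ℂ] G)) :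
    thetaRQ Q R (Kmap Q U) t =
      Kmap Q (U * (TensorProduct.assoc ℂ M G G)
        (TensorProduct.map R.rho.toLinearMap LinearMap.id t)) := by
  induction t using TensorProduct.induction_on with
  | zero => simp
  | add x y hx hy => simp only [map_add, LinearEquiv.map_add, mul_add, hx, hy]
  | tmul n y =>
      rw [thetaRQ_apply]
      simp only [TensorProduct.map_tmul, LinearMap.id_coe, id_eq,
        AlgHom.toLinearMap_apply]
      generalize R.rho n = r
      induction r using TensorProduct.induction_on with
      | zero => simp
      | add x y hx hy =>
          simp only [mul_add, add_tmul, LinearEquiv.map_add, map_add, hx, hy]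
      | tmul r1 r2 =>
          induction U using TensorProduct.induction_on with
          | zero => simp
          | add x y hx hy => simp only [map_add, mul_add, add_mul, hx, hy]
          | tmul u z =>
              simp only [Kmap, TensorProduct.map_tmul, LinearMap.id_coe, id_eq,
                TensorProduct.assoc_tmul, Algebra.TensorProduct.tmul_mul_tmul,
                Ga_mul_tmul, mul_one, one_mul]

lemma lemB' (t : M ⊗[ℂ] G) (V : M ⊗[ℂ] (G ⊗[ℂ] G)) :
    Kmap Q (TensorProduct.map LinearMap.id Q.comul.toLinearMap t * V) =
      ((TensorProduct.rid ℂ M)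
          (TensorProduct.map LinearMap.id Q.counit.toLinearMap t) ⊗ₜ (1 : G)) *
        Kmap Q V := by
  induction t using TensorProduct.induction_on with
  | zero => simp
  | add x y hx hy =>
      simp only [map_add, LinearEquiv.map_add, add_mul, add_tmul, hx, hy]
  | tmul n y =>
      simp only [TensorProduct.map_tmul, LinearMap.id_coe, id_eq,
        AlgHom.toLinearMap_apply, TensorProduct.rid_tmul]
      induction V using TensorProduct.induction_on with
      | zero => simp
      | add x y hx hy => simp only [mul_add, map_add, hx, hy]
      | tmul v w =>
          simp [Kmap, Algebra.TensorProduct.tmul_mul_tmul, Ga_comul_mul,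
            smul_tmul', tmul_smul, smul_mul_assoc, mul_smul_comm]

lemma st1 (m : M) :
    thetaRP Q R (pRho Q R) (R.rho m) = pRho Q R * (m ⊗ₜ[ℂ] (1 : G)) := by
  rw [pRho_eq, lemA, intw_inv, lemB, R.counit_rho]

lemma st2 (m : M) :
    thetaRQ Q R (qRho Q R) (R.rho m) = (m ⊗ₜ[ℂ] (1 : G)) * qRho Q R := by
  rw [qRho_eq, lemA', R.intertwine m, lemB', R.counit_rho]

/-! ### multiplicativity via algebra homs -/

lemma D3_mul (X Y : M ⊗[ℂ] (G ⊗[ℂ] G)) : D3 Q (X * Y) = D3 Q X * D3 Q Y :=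
  map_mul (Algebra.TensorProduct.map (AlgHom.id ℂ M)
    (Algebra.TensorProduct.map (AlgHom.id ℂ G) Q.comul)) X Y

lemma D3_one : D3 Q (1 : M ⊗[ℂ] (G ⊗[ℂ] G)) = 1 :=
  map_one (Algebra.TensorProduct.map (AlgHom.id ℂ M)
    (Algebra.TensorProduct.map (AlgHom.id ℂ G) Q.comul))

lemma R4_mul (X Y : M ⊗[ℂ] (G ⊗[ℂ] G)) : R4 Q R (X * Y) = R4 Q R X * R4 Q R Y :=
  map_mul ((Algebra.TensorProduct.assoc ℂ ℂ ℂ M G (G ⊗[ℂ] G)).toAlgHom.comp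
    (Algebra.TensorProduct.map R.rho (AlgHom.id ℂ (G ⊗[ℂ] G)))) X Y

lemma R4_one : R4 Q R (1 : M ⊗[ℂ] (G ⊗[ℂ] G)) = 1 :=
  map_one ((Algebra.TensorProduct.assoc ℂ ℂ ℂ M G (G ⊗[ℂ] G)).toAlgHom.comp
    (Algebra.TensorProduct.map R.rho (AlgHom.id ℂ (G ⊗[ℂ] G))))

lemma e3M_mul (X Y : M ⊗[ℂ] (G ⊗[ℂ] G)) : e3M Q (X * Y) = e3M Q X * e3M Q Y :=
  map_mul ((Algebra.TensorProduct.map (AlgHom.id ℂ M)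
      (Algebra.TensorProduct.assoc ℂ ℂ ℂ G G G).toAlgHom).comp
    ((Algebra.TensorProduct.assoc ℂ ℂ ℂ M (G ⊗[ℂ] G) G).toAlgHom.comp
      Algebra.TensorProduct.includeLeft)) X Y

lemma e3M_one : e3M Q (1 : M ⊗[ℂ] (G ⊗[ℂ] G)) = 1 :=
  map_one ((Algebra.TensorProduct.map (AlgHom.id ℂ M)
      (Algebra.TensorProduct.assoc ℂ ℂ ℂ G G G).toAlgHom).comp
    ((Algebra.TensorProduct.assoc ℂ ℂ ℂ M (G ⊗[ℂ] G) G).toAlgHom.comp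
      Algebra.TensorProduct.includeLeft))

lemma e2M_alg (X : M ⊗[ℂ] (G ⊗[ℂ] G)) :
    e2M Q X = (Algebra.TensorProduct.map (AlgHom.id ℂ M)
      ((Algebra.TensorProduct.assoc ℂ ℂ ℂ G G G).toAlgHom.comp
        (Algebra.TensorProduct.map Q.comul (AlgHom.id ℂ G)))) X := by
  induction X using TensorProduct.induction_on with
  | zero => simp [e2M]
  | tmul m w => rfl
  | add x y hx hy => simp only [map_add, hx, hy]

lemma e2M_mul (X Y : M ⊗[ℂ] (G ⊗[ℂ] G)) : e2M Q (X * Y) = e2M Q X * e2M Q Y := by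
  rw [e2M_alg, e2M_alg, e2M_alg, map_mul]

lemma e2M_one : e2M Q (1 : M ⊗[ℂ] (G ⊗[ℂ] G)) = 1 := by
  rw [e2M_alg, map_one]

/-! ### counit collapse -/

lemma ridmap_alg (w : G ⊗[ℂ] G) :
    (TensorProduct.rid ℂ G) (TensorProduct.map LinearMap.id Q.counit.toLinearMap w) =
      ((Algebra.TensorProduct.rid ℂ ℂ G).toAlgHom.comp
        (Algebra.TensorProduct.map (AlgHom.id ℂ G) Q.counit)) w := by
  induction w using TensorProduct.induction_on with
  | zero => simp
  | tmul a b => simp [Algebra.TensorProduct.rid_tmul]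
  | add x y hx hy => simp only [map_add, LinearEquiv.map_add, hx, hy]

lemma eps3lin_alg (X : M ⊗[ℂ] (G ⊗[ℂ] G)) :
    eps3lin Q X = (Algebra.TensorProduct.map (AlgHom.id ℂ M)
      ((Algebra.TensorProduct.rid ℂ ℂ G).toAlgHom.comp
        (Algebra.TensorProduct.map (AlgHom.id ℂ G) Q.counit))) X := by
  induction X using TensorProduct.induction_on with
  | zero => simp [eps3lin]
  | tmul m w =>
      simp only [eps3lin, TensorProduct.map_tmul, LinearMap.id_coe, id_eq,
        LinearMap.comp_apply, Algebra.TensorProduct.map_tmul, AlgHom.coe_id,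
        LinearEquiv.coe_coe]
      rw [ridmap_alg]
  | add x y hx hy => simp only [map_add, hx, hy]

lemma eps2lin_alg (X : M ⊗[ℂ] (G ⊗[ℂ] G)) :
    eps2lin Q X = (Algebra.TensorProduct.map (AlgHom.id ℂ M)
      ((Algebra.TensorProduct.lid ℂ G).toAlgHom.comp
        (Algebra.TensorProduct.map Q.counit (AlgHom.id ℂ G)))) X := by
  induction X using TensorProduct.induction_on with
  | zero => simp [eps2lin]
  | tmul m w => rfl
  | add x y hx hy => simp only [map_add, hx, hy]

lemma eps3lin_phiR : eps3lin Q R.phiR = 1 := R.counit_phiR_right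

lemma eps2lin_phiR : eps2lin Q R.phiR = 1 := R.counit_phiR_mid

lemma eps3lin_mul (X Y : M ⊗[ℂ] (G ⊗[ℂ] G)) :
    eps3lin Q (X * Y) = eps3lin Q X * eps3lin Q Y := by
  rw [eps3lin_alg, eps3lin_alg, eps3lin_alg, map_mul]

lemma eps2lin_mul (X Y : M ⊗[ℂ] (G ⊗[ℂ] G)) :
    eps2lin Q (X * Y) = eps2lin Q X * eps2lin Q Y := by
  rw [eps2lin_alg, eps2lin_alg, eps2lin_alg, map_mul]

lemma eps3lin_one : eps3lin Q (1 : M ⊗[ℂ] (G ⊗[ℂ] G)) = 1 := by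
  rw [eps3lin_alg, map_one]

lemma eps2lin_one : eps2lin Q (1 : M ⊗[ℂ] (G ⊗[ℂ] G)) = 1 := by
  rw [eps2lin_alg, map_one]

lemma eps3lin_phiRInv : eps3lin Q R.phiRInv = 1 := by
  have h : eps3lin Q R.phiR * eps3lin Q R.phiRInv = 1 := by
    rw [← eps3lin_mul, R.phiR_mul_inv, eps3lin_one]
  rwa [eps3lin_phiR, one_mul] at h

lemma eps2lin_phiRInv : eps2lin Q R.phiRInv = 1 := by
  have h : eps2lin Q R.phiR * eps2lin Q R.phiRInv = 1 := by
    rw [← eps2lin_mul, R.phiR_mul_inv, eps2lin_one]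
  rwa [eps2lin_phiR, one_mul] at h

lemma e12_collapse (w : G ⊗[ℂ] G) :
    e12 Q w = ((TensorProduct.rid ℂ G)
        (TensorProduct.map LinearMap.id Q.counit.toLinearMap w)) ⊗ₜ
      ((1 : G) ⊗ₜ (1 : G)) := by
  induction w using TensorProduct.induction_on with
  | zero => simp
  | tmul c d => simp [smul_tmul']
  | add x y hx hy => simp only [map_add, LinearEquiv.map_add, add_tmul, hx, hy]

lemma e34_collapse (w : G ⊗[ℂ] G) :
    e34' Q w = (1 : G) ⊗ₜ ((1 : G) ⊗ₜ
      ((TensorProduct.lid ℂ G)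
        (TensorProduct.map Q.counit.toLinearMap LinearMap.id w))) := by
  induction w using TensorProduct.induction_on with
  | zero => simp
  | tmul c d => simp [tmul_smul]
  | add x y hx hy => simp only [map_add, LinearEquiv.map_add, tmul_add, hx, hy]

lemma EM12_collapse (X : M ⊗[ℂ] (G ⊗[ℂ] G)) :
    EM12 Q X = TensorProduct.map LinearMap.id
        ((TensorProduct.mk ℂ G (G ⊗[ℂ] G)).flip ((1 : G) ⊗ₜ (1 : G)))
      (eps3lin Q X) := by
  induction X using TensorProduct.induction_on with
  | zero => simp [EM12, eps3lin]
  | tmul m w =>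
      simp only [EM12, eps3lin, TensorProduct.map_tmul, LinearMap.id_coe, id_eq,
        LinearMap.comp_apply, LinearMap.flip_apply, TensorProduct.mk_apply]
      rw [e12_collapse]
      rfl
  | add x y hx hy => simp only [map_add, hx, hy]

lemma EM34_collapse (X : M ⊗[ℂ] (G ⊗[ℂ] G)) :
    EM34 Q X = TensorProduct.map LinearMap.id
        (TensorProduct.mk ℂ G (G ⊗[ℂ] G) 1 ∘ₗ TensorProduct.mk ℂ G G 1)
      (eps2lin Q X) := by
  induction X using TensorProduct.induction_on with
  | zero => simp [EM34, eps2lin]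
  | tmul m w =>
      simp only [EM34, eps2lin, TensorProduct.map_tmul, LinearMap.id_coe, id_eq,
        LinearMap.comp_apply, TensorProduct.mk_apply]
      rw [e34_collapse]
      rfl
  | add x y hx hy => simp only [map_add, hx, hy]

lemma EM12_phiR : EM12 Q R.phiR = 1 := by
  rw [EM12_collapse, eps3lin_phiR, Algebra.TensorProduct.one_def]
  rfl

lemma EM12_phiRInv : EM12 Q R.phiRInv = 1 := by
  rw [EM12_collapse, eps3lin_phiRInv, Algebra.TensorProduct.one_def]
  rfl

lemma EM34_phiR : EM34 Q R.phiR = 1 := by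
  rw [EM34_collapse, eps2lin_phiR, Algebra.TensorProduct.one_def]
  rfl

lemma EM34_phiRInv : EM34 Q R.phiRInv = 1 := by
  rw [EM34_collapse, eps2lin_phiRInv, Algebra.TensorProduct.one_def]
  rfl

/-! ### T4-level exchange lemmas -/

lemma W0_d3 (V : M ⊗[ℂ] (G ⊗[ℂ] G)) (T : M ⊗[ℂ] (G ⊗[ℂ] (G ⊗[ℂ] G))) :
    W0 Q (D3 Q V * T) = W0 Q (EM12 Q V * T) := by
  induction V using TensorProduct.induction_on with
  | zero => simp
  | add x y hx hy => simp only [map_add, add_mul, hx, hy]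
  | tmul v w =>
      simp only [D3, EM12, TensorProduct.map_tmul, LinearMap.id_coe, id_eq]
      induction T using TensorProduct.induction_on with
      | zero => simp
      | add x y hx hy => simp only [mul_add, map_add, hx, hy]
      | tmul t z =>
          simp only [Algebra.TensorProduct.tmul_mul_tmul, W0,
            TensorProduct.map_tmul, LinearMap.id_coe, id_eq]
          rw [w0_d3_mul]

lemma W0_e2 (T : M ⊗[ℂ] (G ⊗[ℂ] (G ⊗[ℂ] G))) (V : M ⊗[ℂ] (G ⊗[ℂ] G)) :
    W0 Q (T * e2M Q V) = W0 Q (T * EM34 Q V) := by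
  induction V using TensorProduct.induction_on with
  | zero => simp
  | add x y hx hy => simp only [map_add, mul_add, hx, hy]
  | tmul v w =>
      simp only [e2M, EM34, TensorProduct.map_tmul, LinearMap.id_coe, id_eq,
        LinearMap.comp_apply, LinearEquiv.coe_coe]
      induction T using TensorProduct.induction_on with
      | zero => simp
      | add x y hx hy => simp only [add_mul, map_add, hx, hy]
      | tmul t z =>
          simp only [Algebra.TensorProduct.tmul_mul_tmul, W0,
            TensorProduct.map_tmul, LinearMap.id_coe, id_eq]
          rw [w0_mul_e2g]

lemma V0_e2 (V : M ⊗[ℂ] (G ⊗[ℂ] G)) (T : M ⊗[ℂ] (G ⊗[ℂ] (G ⊗[ℂ] G))) :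
    V0 Q (e2M Q V * T) = V0 Q (EM34 Q V * T) := by
  induction V using TensorProduct.induction_on with
  | zero => simp
  | add x y hx hy => simp only [map_add, add_mul, hx, hy]
  | tmul v w =>
      simp only [e2M, EM34, TensorProduct.map_tmul, LinearMap.id_coe, id_eq,
        LinearMap.comp_apply, LinearEquiv.coe_coe]
      induction T using TensorProduct.induction_on with
      | zero => simp
      | add x y hx hy => simp only [mul_add, map_add, hx, hy]
      | tmul t z =>
          simp only [Algebra.TensorProduct.tmul_mul_tmul, V0,
            TensorProduct.map_tmul, LinearMap.id_coe, id_eq]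
          rw [v0_e2g_mul]

lemma V0_d3 (T : M ⊗[ℂ] (G ⊗[ℂ] (G ⊗[ℂ] G))) (V : M ⊗[ℂ] (G ⊗[ℂ] G)) :
    V0 Q (T * D3 Q V) = V0 Q (T * EM12 Q V) := by
  induction V using TensorProduct.induction_on with
  | zero => simp
  | add x y hx hy => simp only [map_add, mul_add, hx, hy]
  | tmul v w =>
      simp only [D3, EM12, TensorProduct.map_tmul, LinearMap.id_coe, id_eq]
      induction T using TensorProduct.induction_on with
      | zero => simp
      | add x y hx hy => simp only [add_mul, map_add, hx, hy]
      | tmul t z =>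
          simp only [Algebra.TensorProduct.tmul_mul_tmul, V0,
            TensorProduct.map_tmul, LinearMap.id_coe, id_eq]
          rw [v0_mul_d3]

/-! ### pentagon manipulations -/

lemma pent :
    ((1 : M) ⊗ₜ[ℂ] Q.assocEl) * e2M Q R.phiR * e3M Q R.phiR =
      D3 Q R.phiR * R4 Q R R.phiR :=
  R.pentagon

lemma P3 :
    R4 Q R R.phiR * e3M Q R.phiRInv =
      D3 Q R.phiRInv * (((1 : M) ⊗ₜ[ℂ] Q.assocEl) * e2M Q R.phiR) := by
  have hd3 : D3 Q R.phiRInv * D3 Q R.phiR = 1 := by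
    rw [← D3_mul, R.phiR_inv_mul, D3_one]
  have he3 : e3M Q R.phiR * e3M Q R.phiRInv = 1 := by
    rw [← e3M_mul, R.phiR_mul_inv, e3M_one]
  have key : D3 Q R.phiR * (R4 Q R R.phiR * e3M Q R.phiRInv) =
      ((1 : M) ⊗ₜ[ℂ] Q.assocEl) * e2M Q R.phiR := by
    rw [← mul_assoc, ← pent,
      mul_assoc (((1 : M) ⊗ₜ[ℂ] Q.assocEl) * e2M Q R.phiR), he3, mul_one]
  calc R4 Q R R.phiR * e3M Q R.phiRInv
      = D3 Q R.phiRInv * D3 Q R.phiR * (R4 Q R R.phiR * e3M Q R.phiRInv) := by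
        rw [hd3, one_mul]
    _ = D3 Q R.phiRInv * (D3 Q R.phiR * (R4 Q R R.phiR * e3M Q R.phiRInv)) := by
        rw [mul_assoc]
    _ = _ := by rw [key]

lemma P4 :
    e3M Q R.phiR * R4 Q R R.phiRInv =
      e2M Q R.phiRInv * (((1 : M) ⊗ₜ[ℂ] Q.assocElInv) * D3 Q R.phiR) := by
  have hR4 : R4 Q R R.phiR * R4 Q R R.phiRInv = 1 := by
    rw [← R4_mul, R.phiR_mul_inv, R4_one]
  have he2 : e2M Q R.phiRInv * e2M Q R.phiR = 1 := by
    rw [← e2M_mul, R.phiR_inv_mul, e2M_one]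
  have hTT : ((1 : M) ⊗ₜ[ℂ] Q.assocElInv) * ((1 : M) ⊗ₜ[ℂ] Q.assocEl) = 1 := by
    rw [Algebra.TensorProduct.tmul_mul_tmul, one_mul, Q.assocEl_inv_mul]
    exact (Algebra.TensorProduct.one_def).symm
  have key2 : ((1 : M) ⊗ₜ[ℂ] Q.assocEl) *
      (e2M Q R.phiR * (e3M Q R.phiR * R4 Q R R.phiRInv)) = D3 Q R.phiR := by
    rw [← mul_assoc, ← mul_assoc, pent, mul_assoc, hR4, mul_one]
  calc e3M Q R.phiR * R4 Q R R.phiRInv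
      = e2M Q R.phiRInv * e2M Q R.phiR * (e3M Q R.phiR * R4 Q R R.phiRInv) := by
        rw [he2, one_mul]
    _ = e2M Q R.phiRInv * (((1 : M) ⊗ₜ[ℂ] Q.assocElInv) * ((1 : M) ⊗ₜ[ℂ] Q.assocEl) *
          (e2M Q R.phiR * (e3M Q R.phiR * R4 Q R R.phiRInv))) := by
        rw [hTT, one_mul, mul_assoc]
    _ = e2M Q R.phiRInv * (((1 : M) ⊗ₜ[ℂ] Q.assocElInv) * (((1 : M) ⊗ₜ[ℂ] Q.assocEl) *
          (e2M Q R.phiR * (e3M Q R.phiR * R4 Q R R.phiRInv)))) := by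
        rw [mul_assoc ((1 : M) ⊗ₜ[ℂ] Q.assocElInv)]
    _ = _ := by rw [key2]

/-! ### the two hard statements -/

lemma lemC (U V : M ⊗[ℂ] (G ⊗[ℂ] G)) :
    thetaRP Q R (Pmap Q U) (Kmap Q V) = W0 Q (R4 Q R V * e3M Q U) := by
  induction V using TensorProduct.induction_on with
  | zero => simp
  | add x y hx hy => simp only [map_add, add_mul, hx, hy]
  | tmul v w =>
      simp only [Kmap, R4, TensorProduct.map_tmul, LinearMap.id_coe, id_eq,
        LinearMap.comp_apply, LinearEquiv.coe_coe, AlgHom.toLinearMap_apply]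
      rw [thetaRP_apply, S_Ga]
      generalize R.rho v = r
      induction r using TensorProduct.induction_on with
      | zero => simp
      | add x y hx hy =>
          simp only [add_mul, add_tmul, LinearEquiv.map_add, map_add, hx, hy]
      | tmul r1 r2 =>
          induction U using TensorProduct.induction_on with
          | zero => simp
          | add x y hx hy => simp only [map_add, mul_add, add_mul, hx, hy]
          | tmul u z =>
              simp only [Pmap, e3M, W0, TensorProduct.map_tmul,
                LinearMap.comp_apply, LinearMap.flip_apply,
                TensorProduct.mk_apply, TensorProduct.assoc_tmul,
                LinearEquiv.coe_coe, LinearMap.id_coe, id_eq,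
                Algebra.TensorProduct.tmul_mul_tmul]
              rw [w0_mul_assoc_tmul]
              simp [mul_assoc]

lemma lemC' (U V : M ⊗[ℂ] (G ⊗[ℂ] G)) :
    thetaRQ Q R (Kmap Q U) (Pmap Q V) = V0 Q (e3M Q U * R4 Q R V) := by
  induction V using TensorProduct.induction_on with
  | zero => simp
  | add x y hx hy => simp only [map_add, mul_add, hx, hy]
  | tmul v w =>
      simp only [Pmap, R4, TensorProduct.map_tmul, LinearMap.id_coe, id_eq,
        LinearMap.comp_apply, LinearEquiv.coe_coe, AlgHom.toLinearMap_apply]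
      rw [thetaRQ_apply, Sinv_Fb]
      generalize R.rho v = r
      induction r using TensorProduct.induction_on with
      | zero => simp
      | add x y hx hy =>
          simp only [mul_add, add_tmul, LinearEquiv.map_add, map_add, hx, hy]
      | tmul r1 r2 =>
          induction U using TensorProduct.induction_on with
          | zero => simp
          | add x y hx hy => simp only [map_add, mul_add, add_mul, hx, hy]
          | tmul u z =>
              simp only [Kmap, e3M, V0, TensorProduct.map_tmul,
                LinearMap.comp_apply, LinearMap.flip_apply,
                TensorProduct.mk_apply, TensorProduct.assoc_tmul,
                LinearEquiv.coe_coe, LinearMap.id_coe, id_eq,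
                Algebra.TensorProduct.tmul_mul_tmul]
              rw [v0_assoc_tmul_mul]
              simp [mul_assoc]

lemma st3 : thetaRP Q R (pRho Q R) (qRho Q R) = (1 : M ⊗[ℂ] G) := by
  rw [pRho_eq, qRho_eq, lemC, P3, W0_d3, EM12_phiRInv, one_mul, W0_e2,
    EM34_phiR, mul_one]
  show (1 : M) ⊗ₜ[ℂ] w0 Q Q.assocEl = 1
  rw [w0_assocEl]
  exact (Algebra.TensorProduct.one_def).symm

lemma st4 : thetaRQ Q R (qRho Q R) (pRho Q R) = (1 : M ⊗[ℂ] G) := by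
  rw [qRho_eq, pRho_eq, lemC', P4, V0_e2, EM34_phiRInv, one_mul, V0_d3,
    EM12_phiR, mul_one]
  show (1 : M) ⊗ₜ[ℂ] v0 Q Q.assocElInv = 1
  rw [v0_assocElInv]
  exact (Algebra.TensorProduct.one_def).symm

end Tlevel

end QH17


/-- Let `(ρ, φ_ρ)` be a right coaction of a quasi-Hopf algebra `G` on `M`,
with `p_ρ = φ̄_ρ¹ ⊗ φ̄_ρ² β S(φ̄_ρ³)` and `q_ρ = φ_ρ¹ ⊗ S⁻¹(α φ_ρ³) φ_ρ²`.  Then for all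
`m ∈ M` (with `ρ(m) = m₍₀₎ ⊗ m₍₁₎`):
`ρ(m₍₀₎)·p_ρ·(1 ⊗ S(m₍₁₎)) = p_ρ·(m ⊗ 1)`,
`(1 ⊗ S⁻¹(m₍₁₎))·q_ρ·ρ(m₍₀₎) = (m ⊗ 1)·q_ρ`,
`ρ(q_ρ¹)·p_ρ·(1 ⊗ S(q_ρ²)) = 1 ⊗ 1`, and
`(1 ⊗ S⁻¹(p_ρ²))·q_ρ·ρ(p_ρ¹) = 1 ⊗ 1`. -/
theorem statement17
    (Q : QuasiHopf G) (R : RightQCoaction G M Q.toQuasiBialg) :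
    (∀ m : M, thetaRP Q R (pRho Q R) (R.rho m) = pRho Q R * (m ⊗ₜ[ℂ] (1 : G))) ∧
    (∀ m : M, thetaRQ Q R (qRho Q R) (R.rho m) = (m ⊗ₜ[ℂ] (1 : G)) * qRho Q R) ∧
    thetaRP Q R (pRho Q R) (qRho Q R) = (1 : M ⊗[ℂ] G) ∧
    thetaRQ Q R (qRho Q R) (pRho Q R) = (1 : M ⊗[ℂ] G) :=
  ⟨fun m => QH17.st1 Q R m, fun m => QH17.st2 Q R m, QH17.st3 Q R, QH17.st4 Q R⟩
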